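/- arXiv:2207.05931 — 2 statements merged into one kernel-verified Lean document; each statement's English description precedes it below -/
import Mathlib

section
/- For all real numbers S and ξ, log(1 + e^{-S-ξ}) ≤ (1 + e^{-ξ}) · log(1 + e^{-S}). (Consequently, log(1 + e^{-S}) ≥ log(1 + e^{-S-ξ})/(1 + e^{-ξ}), the inequality used to lower-bound the idealized losses ℒ̂(α) and ℒ̂(Ξ) by the full training loss.) -/
/-- The softplus loss at a shifted argument `S + ξ` is at most `(1 + e^{-ξ})` times the
softplus loss at `S`. -/
theorem softplus_shift_bound (S ξ : ℝ) :
    Real.log (1 + Real.exp (-S - ξ)) ≤ (1 + Real.exp (-ξ)) * Real.log (1 + Real.exp (-S)) := by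
  set x := Real.exp (-S) with hx
  set c := Real.exp (-ξ) with hc
  have hxpos : 0 < x := Real.exp_pos _
  have hcpos : 0 < c := Real.exp_pos _
  have hxe : Real.exp (-S - ξ) = c * x := by
    rw [hx, hc, ← Real.exp_add]; ring_nf
  have key : 1 + c * x ≤ (1 + x) ^ (1 + c) := by
    calc 1 + c * x ≤ 1 + (1 + c) * x := by nlinarith
      _ ≤ (1 + x) ^ (1 + c) :=
        one_add_mul_self_le_rpow_one_add (by linarith) (by linarith)
  have hlog : Real.log (1 + c * x) ≤ Real.log ((1 + x) ^ (1 + c)) :=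
    Real.log_le_log (by positivity) key
  rw [Real.log_rpow (by linarith)] at hlog
  rw [hxe]
  exact hlog
end

section
/- Let E be a finite-dimensional real inner product space, let f : E → ℝ be differentiable with f(x) ≥ 0 for all x, and suppose ∇f is Lipschitz with constant L > 0. Fix a step size η with 0 < η ≤ 1/L and a constant c > 0, and define gradient-descent iterates by x_{t+1} = x_t − η·∇f(x_t). If ‖∇f(x_t)‖² ≥ c·f(x_t)² for every t ≥ 0, and f(x_0) ≤ 2/(η c), then for every t ≥ 0, f(x_t) ≤ 2/(η·c·(t+1)). -/
/-!
By the descent lemma, a gradient step with `η ≤ 1 / L` lowers `f` by at least `η / 2 * ‖∇f‖ ^ 2`,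
hence by `K * f ^ 2` with `K = η c / 2` under the gradient lower bound. A sequence with
`a (t + 1) ≤ a t - K * a t ^ 2` and `a 0 ≤ 1 / K` then stays below `1 / (K (t + 1))`: writing
`u = K * a t`, the induction step is `u - u ^ 2 ≤ 1 / (s + 1)` whenever `u * s ≤ 1 ≤ s`.
-/

open Set
open scoped NNReal RealInnerProductSpace

section Smooth

variable {E : Type*} [NormedAddCommGroup E] [InnerProductSpace ℝ E] [CompleteSpace E]
  {f : E → ℝ}

theorem hasDerivAt_comp_add_smul {x v : E} {t : ℝ} (hf : DifferentiableAt ℝ f (x + t • v)) :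
    HasDerivAt (fun s : ℝ ↦ f (x + s • v)) ⟪gradient f (x + t • v), v⟫ t := by
  have hline : HasDerivAt (fun s : ℝ ↦ x + s • v) v t := by
    simpa using ((hasDerivAt_id t).smul_const v).const_add x
  simpa [Function.comp_def] using hf.hasGradientAt.hasFDerivAt.comp_hasDerivAt t hline

theorem LipschitzWith.inner_gradient_add_smul_sub_le {K : ℝ≥0} (hK : LipschitzWith K (gradient f))
    (x v : E) {t : ℝ} (ht : 0 ≤ t) :
    ⟪gradient f (x + t • v) - gradient f x, v⟫ ≤ K * t * ‖v‖ ^ 2 :=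
  calc ⟪gradient f (x + t • v) - gradient f x, v⟫
      ≤ ‖gradient f (x + t • v) - gradient f x‖ * ‖v‖ := real_inner_le_norm _ _
    _ ≤ K * ‖t • v‖ * ‖v‖ := by
        gcongr
        simpa [dist_eq_norm] using hK.dist_le_mul (x + t • v) x
    _ = K * t * ‖v‖ ^ 2 := by
        rw [norm_smul, Real.norm_of_nonneg ht]; ring

/-- The descent lemma for a function with `K`-Lipschitz gradient. -/
theorem LipschitzWith.image_add_le {K : ℝ≥0} (hf : Differentiable ℝ f)
    (hK : LipschitzWith K (gradient f)) (x v : E) :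
    f (x + v) ≤ f x + ⟪gradient f x, v⟫ + K / 2 * ‖v‖ ^ 2 := by
  set φ : ℝ → ℝ := fun t ↦ f (x + t • v) - t * ⟪gradient f x, v⟫ - K / 2 * t ^ 2 * ‖v‖ ^ 2
  have hφ : ∀ t, HasDerivAt φ
      (⟪gradient f (x + t • v), v⟫ - ⟪gradient f x, v⟫ - K * t * ‖v‖ ^ 2) t := fun t ↦ by
    have hsq := ((hasDerivAt_pow 2 t).const_mul (K / 2 : ℝ)).mul_const (‖v‖ ^ 2)
    refine (((hasDerivAt_comp_add_smul (x := x) (v := v) (hf _)).sub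
      ((hasDerivAt_id' t).mul_const ⟪gradient f x, v⟫)).sub hsq).congr_deriv ?_
    simp only [Nat.cast_ofNat, one_mul]
    ring
  have hanti : AntitoneOn φ (Icc 0 1) := by
    refine antitoneOn_of_hasDerivWithinAt_nonpos (convex_Icc 0 1)
      (fun t _ ↦ (hφ t).continuousAt.continuousWithinAt)
      (fun t _ ↦ (hφ t).hasDerivWithinAt) fun t ht ↦ ?_
    rw [interior_Icc] at ht
    have := hK.inner_gradient_add_smul_sub_le x v ht.1.le
    rw [inner_sub_left] at this
    linarith
  have := hanti (left_mem_Icc.2 zero_le_one) (right_mem_Icc.2 zero_le_one) zero_le_one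
  simp only [φ, one_smul, one_mul, one_pow, zero_smul, add_zero, zero_mul, mul_zero,
    zero_pow two_ne_zero, sub_zero] at this
  linarith

theorem LipschitzWith.image_sub_smul_gradient_le {K : ℝ≥0} (hf : Differentiable ℝ f)
    (hK : LipschitzWith K (gradient f)) (x : E) {η : ℝ} (hη : 0 ≤ η) (hηK : η * K ≤ 1) :
    f (x - η • gradient f x) ≤ f x - η / 2 * ‖gradient f x‖ ^ 2 := by
  have h := hK.image_add_le hf x (-(η • gradient f x))
  rw [← sub_eq_add_neg, inner_neg_right, real_inner_smul_right, real_inner_self_eq_norm_sq,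
    norm_neg, norm_smul, Real.norm_of_nonneg hη] at h
  nlinarith [mul_nonneg (mul_nonneg hη (sq_nonneg ‖gradient f x‖)) (sub_nonneg.2 hηK)]

end Smooth

theorem sub_sq_le_one_div_add_one {u s : ℝ} (hs : 1 ≤ s) (hu : u * s ≤ 1) :
    u - u ^ 2 ≤ 1 / (s + 1) := by
  rw [le_div_iff₀ (by linarith)]
  nlinarith [sq_nonneg (u * s - 1 + u), sq_nonneg u]

theorem le_one_div_mul_succ_of_le_sub_mul_sq {a : ℕ → ℝ} {K : ℝ} (hK : 0 < K)
    (hstep : ∀ t, a (t + 1) ≤ a t - K * a t ^ 2) (h0 : a 0 ≤ 1 / K) :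
    ∀ t : ℕ, a t ≤ 1 / (K * (t + 1)) := by
  intro t
  induction t with
  | zero => simpa using h0
  | succ t ih =>
    have hs : (1 : ℝ) ≤ t + 1 := by simp
    have hu : K * a t * (t + 1) ≤ 1 := by
      rw [le_div_iff₀ (by positivity)] at ih
      linarith
    have hKa : K * a (t + 1) ≤ 1 / (t + 1 + 1) :=
      calc K * a (t + 1) ≤ K * (a t - K * a t ^ 2) := by gcongr; exact hstep t
        _ = K * a t - (K * a t) ^ 2 := by ring
        _ ≤ 1 / (t + 1 + 1) := sub_sq_le_one_div_add_one hs hu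
    rw [mul_comm, ← div_div, le_div_iff₀ hK, mul_comm]
    push_cast
    exact hKa

theorem gd_sublinear_convergence_general {E : Type*} [NormedAddCommGroup E] [InnerProductSpace ℝ E]
    [FiniteDimensional ℝ E] (f : E → ℝ) (hf : Differentiable ℝ f)
    (L : ℝ) (hL : 0 < L)
    (hlip : LipschitzWith L.toNNReal (gradient f))
    (η : ℝ) (hη : 0 < η) (hηL : η ≤ 1 / L) (c : ℝ) (hc : 0 < c)
    (x : ℕ → E) (hx : ∀ t, x (t + 1) = x t - η • gradient f (x t))
    (hgrad : ∀ t, ‖gradient f (x t)‖ ^ 2 ≥ c * (f (x t)) ^ 2)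
    (h0 : f (x 0) ≤ 2 / (η * c)) :
    ∀ t : ℕ, f (x t) ≤ 2 / (η * c * (t + 1)) := by
  have hηLnn : η * L.toNNReal ≤ 1 := by
    rwa [Real.coe_toNNReal L hL.le, ← le_div_iff₀ hL]
  have hstep : ∀ t, f (x (t + 1)) ≤ f (x t) - η * c / 2 * f (x t) ^ 2 := fun t ↦
    calc f (x (t + 1)) ≤ f (x t) - η / 2 * ‖gradient f (x t)‖ ^ 2 := by
          rw [hx t]; exact hlip.image_sub_smul_gradient_le hf (x t) hη.le hηLnn
      _ ≤ f (x t) - η * c / 2 * f (x t) ^ 2 := by nlinarith [hgrad t, hη]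
  have hrate := le_one_div_mul_succ_of_le_sub_mul_sq (a := fun t ↦ f (x t)) (by positivity) hstep
    (by rwa [one_div_div])
  intro t
  simpa [div_mul_eq_mul_div, one_div_div] using hrate t

/-- Sublinear convergence of gradient descent: if the function is nonnegative, `L`-smooth,
and satisfies the gradient lower bound `‖∇f(x_t)‖² ≥ c·f(x_t)²` along the iterates, then
the values decay at rate `O(1/(η t))`. -/
theorem gd_sublinear_convergence {E : Type*} [NormedAddCommGroup E] [InnerProductSpace ℝ E]
    [FiniteDimensional ℝ E] (f : E → ℝ) (hf : Differentiable ℝ f)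
    (hfpos : ∀ x, 0 ≤ f x) (L : ℝ) (hL : 0 < L)
    (hlip : LipschitzWith L.toNNReal (gradient f))
    (η : ℝ) (hη : 0 < η) (hηL : η ≤ 1 / L) (c : ℝ) (hc : 0 < c)
    (x : ℕ → E) (hx : ∀ t, x (t + 1) = x t - η • gradient f (x t))
    (hgrad : ∀ t, ‖gradient f (x t)‖ ^ 2 ≥ c * (f (x t)) ^ 2)
    (h0 : f (x 0) ≤ 2 / (η * c)) :
    ∀ t : ℕ, f (x t) ≤ 2 / (η * c * (t + 1)) :=
  gd_sublinear_convergence_general f hf L hL hlip η hη hηL c hc x hx hgrad h0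
end
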